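/- arXiv:2203.04953 — 3 statements merged into one kernel-verified Lean document; each statement's English description precedes it below -/
import Mathlib

section
/- Let G be a finite simple graph whose complement is disconnected. Then G is a minimal unipolar obstruction if and only if G is isomorphic to the complete bipartite graph K_{2,3}. -/
open SimpleGraph

universe u v

/-! ### Basic predicates -/

/-- `B` induces a disjoint union of complete graphs in `G` (i.e. `G[B]` is a cluster). -/
def IsClusterSet {V : Type*} (G : SimpleGraph V) (B : Set V) : Prop :=
  ∀ ⦃u w x : V⦄, u ∈ B → w ∈ B → x ∈ B → G.Adj u w → G.Adj w x → u ≠ x → G.Adj u x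

/-- `A` induces a complete multipartite graph in `G`
(the complement of `G[A]` is a disjoint union of cliques). -/
def IsCompleteMultipartiteSet {V : Type*} (G : SimpleGraph V) (A : Set V) : Prop :=
  ∀ ⦃u w x : V⦄, u ∈ A → w ∈ A → x ∈ A → u ≠ w → w ≠ x → u ≠ x →
    ¬ G.Adj u w → ¬ G.Adj w x → ¬ G.Adj u x

/-- `A` is an independent set of `G`. -/
def IsIndepSet {V : Type*} (G : SimpleGraph V) (A : Set V) : Prop :=
  ∀ ⦃u w : V⦄, u ∈ A → w ∈ A → ¬ G.Adj u w

/-- `G[B]` is a disjoint union of at most `k` complete graphs. -/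
def IsClusterSetLE {V : Type*} (G : SimpleGraph V) (k : ℕ) (B : Set V) : Prop :=
  ∃ g : B → Fin k, ∀ u w : B, u ≠ w → (G.Adj u w ↔ g u = g w)

/-- `G[A]` is a complete multipartite graph with at most `s` parts. -/
def IsCompleteMultipartiteSetLE {V : Type*} (G : SimpleGraph V) (s : ℕ) (A : Set V) : Prop :=
  ∃ f : A → Fin s, ∀ u w : A, G.Adj u w ↔ f u ≠ f w

/-! ### Polarity properties -/

/-- `G` is unipolar: a partition `(A, Aᶜ)` with `A` a clique and `G[Aᶜ]` a cluster. -/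
def Unipolar {V : Type*} (G : SimpleGraph V) : Prop :=
  ∃ A : Set V, G.IsClique A ∧ IsClusterSet G Aᶜ

/-- `G` is monopolar ((1,∞)-polar). -/
def Monopolar {V : Type*} (G : SimpleGraph V) : Prop :=
  ∃ A : Set V, _root_.IsIndepSet G A ∧ IsClusterSet G Aᶜ

/-- `G` is polar ((∞,∞)-polar). -/
def Polar {V : Type*} (G : SimpleGraph V) : Prop :=
  ∃ A : Set V, IsCompleteMultipartiteSet G A ∧ IsClusterSet G Aᶜ

/-- `G` is (s,1)-polar. -/
def SOnePolar {V : Type*} (s : ℕ) (G : SimpleGraph V) : Prop :=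
  ∃ A : Set V, IsCompleteMultipartiteSetLE G s A ∧ G.IsClique Aᶜ

/-- `G` is (∞,1)-polar. -/
def InfOnePolar {V : Type*} (G : SimpleGraph V) : Prop :=
  ∃ A : Set V, IsCompleteMultipartiteSet G A ∧ G.IsClique Aᶜ

/-- `G` is (1,k)-polar. -/
def OneKPolar {V : Type*} (k : ℕ) (G : SimpleGraph V) : Prop :=
  ∃ A : Set V, _root_.IsIndepSet G A ∧ IsClusterSetLE G k Aᶜ

/-! ### Minimal obstructions -/

def MinUnipolarObstruction {V : Type*} (G : SimpleGraph V) : Prop :=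
  ¬ Unipolar G ∧ ∀ s : Set V, s ≠ Set.univ → Unipolar (G.induce s)

def MinMonopolarObstruction {V : Type*} (G : SimpleGraph V) : Prop :=
  ¬ Monopolar G ∧ ∀ s : Set V, s ≠ Set.univ → Monopolar (G.induce s)

def MinPolarObstruction {V : Type*} (G : SimpleGraph V) : Prop :=
  ¬ Polar G ∧ ∀ s : Set V, s ≠ Set.univ → Polar (G.induce s)

def MinSOnePolarObstruction {V : Type*} (s : ℕ) (G : SimpleGraph V) : Prop :=
  ¬ SOnePolar s G ∧ ∀ t : Set V, t ≠ Set.univ → SOnePolar s (G.induce t)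

def MinInfOnePolarObstruction {V : Type*} (G : SimpleGraph V) : Prop :=
  ¬ InfOnePolar G ∧ ∀ t : Set V, t ≠ Set.univ → InfOnePolar (G.induce t)

def MinOneKPolarObstruction {V : Type*} (k : ℕ) (G : SimpleGraph V) : Prop :=
  ¬ OneKPolar k G ∧ ∀ t : Set V, t ≠ Set.univ → OneKPolar k (G.induce t)

/-! ### Graph constructions -/

/-- The join of two graphs: all edges added between the summands. -/
def joinG {α β : Type*} (G : SimpleGraph α) (H : SimpleGraph β) : SimpleGraph (α ⊕ β) where
  Adj x y := (G ⊕g H).Adj x y ∨ (x.isLeft ∧ y.isRight) ∨ (x.isRight ∧ y.isLeft)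
  symm := ⟨fun x y h => by
    rcases h with h | ⟨h1, h2⟩ | ⟨h1, h2⟩
    · exact Or.inl ((G ⊕g H).symm.symm _ _ h)
    · exact Or.inr (Or.inr ⟨h2, h1⟩)
    · exact Or.inr (Or.inl ⟨h2, h1⟩)⟩
  loopless := ⟨fun x h => by
    rcases h with h | ⟨h1, h2⟩ | ⟨h1, h2⟩
    · exact (G ⊕g H).loopless.irrefl x h
    · cases x <;> simp_all
    · cases x <;> simp_all⟩

/-- `K_n`, the complete graph on `n` vertices. -/
def KG (n : ℕ) : SimpleGraph (Fin n) := ⊤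

/-- `n K_1`, the edgeless graph on `n` vertices. -/
def EG (n : ℕ) : SimpleGraph (Fin n) := ⊥

/-- The banner graph `P`: a four-cycle `0 1 2 3` with a pendant vertex `4` adjacent to `0`. -/
def banner : SimpleGraph (Fin 5) :=
  SimpleGraph.fromEdgeSet {s(0, 1), s(1, 2), s(2, 3), s(3, 0), s(0, 4)}

/-- The chair (fork) graph `F`: a path `0 1 2 3` with an extra vertex `4` adjacent to `1`. -/
def chair : SimpleGraph (Fin 5) :=
  SimpleGraph.fromEdgeSet {s(0, 1), s(1, 2), s(2, 3), s(1, 4)}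

/-- `2P_3`. -/
def twoP3 : SimpleGraph (Fin 3 ⊕ Fin 3) := pathGraph 3 ⊕g pathGraph 3

/-- `K_{2,3}`. -/
def K23 : SimpleGraph (Fin 2 ⊕ Fin 3) := completeBipartiteGraph (Fin 2) (Fin 3)

/-- The seven graphs `E1, E2, E3, E7, E10, E11, E12`. -/
def E1 : SimpleGraph (Fin 1 ⊕ (Fin 2 ⊕ Fin 2)) := KG 1 ⊕g (KG 2 ⊕g KG 2)
def E2 : SimpleGraph (Fin 3 ⊕ Fin 3) := pathGraph 3 ⊕g pathGraph 3
def E3 : SimpleGraph (Fin 4 ⊕ Fin 2) := cycleGraph 4 ⊕g EG 2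
def E7 : SimpleGraph (Fin 1 ⊕ (Fin 3 ⊕ Fin 2)) := KG 1 ⊕g (pathGraph 3 ⊕g KG 2)ᶜ
def E10 : SimpleGraph (Fin 1 ⊕ Fin 5) := KG 1 ⊕g cycleGraph 5
def E11 : SimpleGraph (Fin 1 ⊕ Fin 5) := KG 1 ⊕g banner
def E12 : SimpleGraph (Fin 1 ⊕ Fin 5) := KG 1 ⊕g (pathGraph 5)ᶜ

/-! ### P4 structure -/

/-- `W` induces a path on four vertices in `G`. -/
def InducesP4 {V : Type*} (G : SimpleGraph V) (W : Set V) : Prop :=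
  Nonempty (G.induce W ≃g pathGraph 4)

/-- A graph is a cograph if it has no induced `P_4`. -/
def Cograph {V : Type*} (G : SimpleGraph V) : Prop :=
  ∀ W : Set V, ¬ InducesP4 G W

/-- `G` is `P_4`-sparse: any five vertices induce at most one `P_4`. -/
def P4Sparse {V : Type*} (G : SimpleGraph V) : Prop :=
  ∀ s : Set V, s.ncard = 5 → ∀ W₁ W₂ : Set V, W₁ ⊆ s → W₂ ⊆ s →
    InducesP4 G W₁ → InducesP4 G W₂ → W₁ = W₂

/-- `G` is `P_4`-extendible. -/
def P4Extendible {V : Type*} (G : SimpleGraph V) : Prop :=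
  ∀ W : Set V, InducesP4 G W →
    ∀ v₁ v₂ : V, v₁ ∉ W → v₂ ∉ W →
      (∃ W₁ : Set V, InducesP4 G W₁ ∧ v₁ ∈ W₁ ∧ (W₁ ∩ W).Nonempty) →
      (∃ W₂ : Set V, InducesP4 G W₂ ∧ v₂ ∈ W₂ ∧ (W₂ ∩ W).Nonempty) → v₁ = v₂

/-! ### Spiders -/

/-- `(S, K, R)` is a spider partition of `G`. -/
def IsSpiderPartition {V : Type*} (G : SimpleGraph V) (S K R : Set V) : Prop :=
  S ∪ K ∪ R = Set.univ ∧ Disjoint S K ∧ Disjoint S R ∧ Disjoint K R ∧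
  S.ncard = K.ncard ∧ 2 ≤ K.ncard ∧
  G.IsClique K ∧ _root_.IsIndepSet G S ∧
  (∃ f : S → K, Function.Bijective f ∧
    ((∀ s : S, ∀ k : K, G.Adj s k ↔ (f s : V) = k) ∨
     (∀ s : S, ∀ k : K, G.Adj s k ↔ (f s : V) ≠ k))) ∧
  (∀ r ∈ R, ∀ k ∈ K, G.Adj r k) ∧
  (∀ r ∈ R, ∀ s ∈ S, ¬ G.Adj r s)

/-- `G` is a `B`-spider with partition `(S, K, R)`, where `B` is a fixed base graph with
midpoint set `M` and endpoint set `E`: `G` is obtained from a copy of `B` (whose midpoints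
form `K` and whose endpoints form `S`) by adding the set `R` of vertices, each adjacent to
all midpoints and to no endpoint. -/
def IsBaseSpider {n : ℕ} {V : Type*} (B : SimpleGraph (Fin n)) (M E : Set (Fin n))
    (G : SimpleGraph V) (S K R : Set V) : Prop :=
  ∃ f : Fin n → V, Function.Injective f ∧
    (∀ i j : Fin n, G.Adj (f i) (f j) ↔ B.Adj i j) ∧
    K = f '' M ∧ S = f '' E ∧ R = (Set.range f)ᶜ ∧
    (∀ r ∈ R, ∀ x ∈ K, G.Adj r x) ∧
    (∀ r ∈ R, ∀ x ∈ S, ¬ G.Adj r x)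

/-!
If `Gᶜ` is disconnected, `G` is the join of `G[L]` and `G[Lᶜ]`. In a join, the cluster part of a
unipolar partition that meets both sides is a clique, so a unipolar vertex set is a clique on one
side or is covered by two cliques. In a minimal obstruction the two sides are not both covered by
two cliques; say `Lᶜ` is not. Minimality then makes every `L \ {u}` a clique while `L` is not, so
`L` is a non-adjacent pair; and it makes every proper subset of `Lᶜ` a union of two cliques. Since
a unipolar set without independent triples is covered by two cliques, `Lᶜ` contains an
independent triple, which cannot be a proper subset, so `Lᶜ` is an independent triple.
Conversely `K_{2,3}` is not unipolar, while deleting a vertex leaves `K_{1,3}` or `C_4`.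
-/

section

variable {V W : Type*} {G : SimpleGraph V} {H : SimpleGraph W} {s t L : Set V}

def IsUnipolarSet (G : SimpleGraph V) (s : Set V) : Prop :=
  ∃ A ⊆ s, G.IsClique A ∧ IsClusterSet G (s \ A)

/-- `s` is covered by two cliques, i.e. the complement of `G[s]` is bipartite. -/
def IsCoBipartiteSet (G : SimpleGraph V) (s : Set V) : Prop :=
  ∃ A ⊆ s, G.IsClique A ∧ G.IsClique (s \ A)

theorem SimpleGraph.IsClique.isClusterSet (h : G.IsClique s) : IsClusterSet G s :=
  fun _ _ _ hu _ hx _ _ hne => h hu hx hne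

theorem SimpleGraph.IsClique.isCoBipartiteSet (h : G.IsClique s) : IsCoBipartiteSet G s :=
  ⟨s, subset_rfl, h, by simp⟩

theorem IsCoBipartiteSet.mono (hst : s ⊆ t) (h : IsCoBipartiteSet G t) :
    IsCoBipartiteSet G s := by
  obtain ⟨A, -, hA, hB⟩ := h
  refine ⟨A ∩ s, Set.inter_subset_right, hA.subset Set.inter_subset_left, hB.subset ?_⟩
  intro x hx
  exact ⟨hst hx.1, fun hxA => hx.2 ⟨hxA, hx.1⟩⟩

theorem IsCoBipartiteSet.isUnipolarSet (h : IsCoBipartiteSet G s) : IsUnipolarSet G s := by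
  obtain ⟨A, hAs, hA, hB⟩ := h
  exact ⟨A, hAs, hA, hB.isClusterSet⟩

theorem IsCoBipartiteSet.ncard_le_two (h : IsCoBipartiteSet G s) (hs : G.IsIndepSet s) :
    s.ncard ≤ 2 := by
  obtain ⟨A, hAs, hA, hB⟩ := h
  have ncard_le_one : ∀ C ⊆ s, G.IsClique C → C.ncard ≤ 1 := fun C hCs hC => by
    have hC' : C.Subsingleton := fun x hx y hy =>
      by_contra fun hne => hs (hCs hx) (hCs hy) hne (hC hx hy hne)
    have := hC'.finite.to_subtype
    exact Set.ncard_le_one_iff_subsingleton.2 hC'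
  calc s.ncard = (A ∪ s \ A).ncard := by rw [Set.union_sdiff_cancel hAs]
    _ ≤ A.ncard + (s \ A).ncard := Set.ncard_union_le _ _
    _ ≤ 1 + 1 := add_le_add (ncard_le_one A hAs hA) (ncard_le_one _ Set.sdiff_subset hB)

theorem IsUnipolarSet.preimage (f : G ↪g H) {t : Set W} (h : IsUnipolarSet H t) :
    IsUnipolarSet G (f ⁻¹' t) := by
  obtain ⟨A, hAt, hA, hB⟩ := h
  refine ⟨f ⁻¹' A, Set.preimage_mono hAt,
    fun x hx y hy hxy => f.map_adj_iff.1 (hA hx hy (f.injective.ne hxy)), ?_⟩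
  intro u w x hu hw hx huw hwx hux
  exact f.map_adj_iff.1
    (hB hu hw hx (f.map_adj_iff.2 huw) (f.map_adj_iff.2 hwx) (f.injective.ne hux))

theorem IsUnipolarSet.image (f : G ↪g H) (h : IsUnipolarSet G s) : IsUnipolarSet H (f '' s) := by
  obtain ⟨A, hAs, hA, hB⟩ := h
  refine ⟨f '' A, Set.image_mono hAs, ?_, ?_⟩
  · rintro _ ⟨x, hx, rfl⟩ _ ⟨y, hy, rfl⟩ hxy
    exact f.map_adj_iff.2 (hA hx hy (ne_of_apply_ne f hxy))
  · rw [← Set.image_sdiff f.injective]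
    rintro _ _ _ ⟨u, hu, rfl⟩ ⟨w, hw, rfl⟩ ⟨x, hx, rfl⟩ huw hwx hux
    exact f.map_adj_iff.2
      (hB hu hw hx (f.map_adj_iff.1 huw) (f.map_adj_iff.1 hwx) (ne_of_apply_ne f hux))

theorem unipolar_iff_isUnipolarSet_univ : Unipolar G ↔ IsUnipolarSet G Set.univ := by
  simp [Unipolar, IsUnipolarSet, Set.compl_eq_univ_sdiff]

theorem unipolar_induce_iff : Unipolar (G.induce s) ↔ IsUnipolarSet G s := by
  rw [unipolar_iff_isUnipolarSet_univ]
  have hf : ⇑(Embedding.induce s : G.induce s ↪g G) = Subtype.val := rfl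
  refine ⟨fun h => ?_, fun h => ?_⟩
  · simpa [hf] using h.image (Embedding.induce s)
  · simpa [hf] using h.preimage (Embedding.induce s)

theorem minUnipolarObstruction_iff : MinUnipolarObstruction G ↔
    ¬ IsUnipolarSet G Set.univ ∧ ∀ s, s ≠ Set.univ → IsUnipolarSet G s := by
  rw [MinUnipolarObstruction, unipolar_iff_isUnipolarSet_univ]
  simp only [unipolar_induce_iff]

theorem MinUnipolarObstruction.of_iso (e : G ≃g H) (h : MinUnipolarObstruction H) :
    MinUnipolarObstruction G := by
  rw [minUnipolarObstruction_iff] at h ⊢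
  refine ⟨fun hG => h.1 (by simpa using hG.preimage e.symm.toEmbedding), fun s hs => ?_⟩
  have hs' : e.symm ⁻¹' s ≠ Set.univ := by simpa using hs
  simpa [Set.preimage_preimage] using (h.2 _ hs').preimage e.toEmbedding

theorem isIndepSet_and_ncard_eq_two_of_forall_isClique_sdiff_singleton (h : ¬ G.IsClique s)
    (hs : ∀ u ∈ s, G.IsClique (s \ {u})) : G.IsIndepSet s ∧ s.ncard = 2 := by
  obtain ⟨u, hu, v, hv, huv, hadj⟩ : ∃ u ∈ s, ∃ v ∈ s, u ≠ v ∧ ¬ G.Adj u v := by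
    simpa [SimpleGraph.IsClique, Set.Pairwise] using h
  have hs_eq : s = {u, v} := by
    refine (Set.insert_subset hu (Set.singleton_subset_iff.2 hv)).antisymm' fun z hz => ?_
    by_contra hz'
    simp only [Set.mem_insert_iff, Set.mem_singleton_iff, not_or] at hz'
    exact hadj (hs z hz ⟨hu, Ne.symm hz'.1⟩ ⟨hv, Ne.symm hz'.2⟩ huv)
  subst hs_eq
  exact ⟨Set.pairwise_pair.2 fun _ => ⟨hadj, fun h => hadj h.symm⟩,
    Set.ncard_eq_two.2 ⟨u, v, huv, rfl⟩⟩

theorem adj_of_not_adj_of_not_adj (hs : ∀ t ⊆ s, G.IsIndepSet t → t.ncard ≠ 3) {x y z : V}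
    (hx : x ∈ s) (hy : y ∈ s) (hz : z ∈ s) (hxy : x ≠ y) (hxz : x ≠ z) (hyz : y ≠ z)
    (h₁ : ¬ G.Adj x y) (h₂ : ¬ G.Adj x z) : G.Adj y z := by
  by_contra h₃
  have hindep : G.IsIndepSet {x, y, z} := by
    rw [← isClique_compl]
    simp only [isClique_insert, isClique_singleton, compl_adj, Set.mem_insert_iff,
      Set.mem_singleton_iff, true_and]
    grind
  exact hs _ (by simp [Set.insert_subset_iff, hx, hy, hz]) hindep
    (Set.ncard_eq_three.2 ⟨x, y, z, hxy, hxz, hyz, rfl⟩)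

theorem IsClusterSet.exists_isClique_isClique_sdiff (hB : IsClusterSet G s)
    (hT : ∀ t ⊆ s, G.IsIndepSet t → t.ncard ≠ 3) :
    ∃ P ⊆ s, G.IsClique P ∧ G.IsClique (s \ P) ∧
      ∀ x ∈ P, ∀ y ∈ s \ P, ¬ G.Adj x y := by
  rcases s.eq_empty_or_nonempty with rfl | ⟨p, hp⟩
  · exact ⟨∅, by simp, by simp, by simp, by simp⟩
  -- `P` is the cluster component of `p`; without independent triples the rest is one clique
  have hnbr : ∀ x ∈ s, G.Adj p x → ∀ y ∈ s, ¬ G.Adj p y → y ≠ p → ¬ G.Adj x y :=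
    fun x hx hpx y hy hpy hyp hxy => hpy (hB hp hx hy hpx hxy hyp.symm)
  refine ⟨insert p {x ∈ s | G.Adj p x}, Set.insert_subset hp (Set.sep_subset _ _), ?_, ?_, ?_⟩
  · refine isClique_insert.2 ⟨fun x hx y hy hxy => hB hx.1 hp hy.1 hx.2.symm hy.2 hxy,
      fun x hx _ => hx.2⟩
  · rintro x ⟨hx, hxP⟩ y ⟨hy, hyP⟩ hxy
    simp only [Set.mem_insert_iff, Set.mem_ofPred_eq, not_or] at hxP hyP
    exact adj_of_not_adj_of_not_adj hT hp hx hy (Ne.symm hxP.1) (Ne.symm hyP.1) hxy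
      (fun h => hxP.2 ⟨hx, h⟩) (fun h => hyP.2 ⟨hy, h⟩)
  · rintro x hxP y ⟨hy, hyP⟩
    simp only [Set.mem_insert_iff, Set.mem_ofPred_eq, not_or, not_and] at hxP hyP
    rcases hxP with rfl | ⟨hx, hpx⟩
    · exact hyP.2 hy
    · exact hnbr x hx hpx y hy (hyP.2 hy) hyP.1

theorem IsUnipolarSet.isCoBipartiteSet (h : IsUnipolarSet G s)
    (hT : ∀ t ⊆ s, G.IsIndepSet t → t.ncard ≠ 3) : IsCoBipartiteSet G s := by
  obtain ⟨A, hAs, hA, hB⟩ := h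
  obtain ⟨P, hPB, hP, hQ, hPQ⟩ :=
    hB.exists_isClique_isClique_sdiff fun t ht => hT t (ht.trans Set.sdiff_subset)
  -- a vertex of `A` with non-neighbours in both `P` and `Q` would lie in an independent triple
  set Q := (s \ A) \ P
  set A₁ := {a ∈ A | ∃ w ∈ Q, ¬ G.Adj a w}
  have hA₁P : ∀ a ∈ A₁, ∀ m ∈ P, G.Adj a m := by
    rintro a ⟨ha, w, hw, haw⟩ m hm
    by_contra ham
    exact hPQ m hm w hw <| adj_of_not_adj_of_not_adj hT (hAs ha) (hPB hm).1 hw.1.1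
      (fun h => (hPB hm).2 (h ▸ ha)) (fun h => hw.1.2 (h ▸ ha)) (fun h => hw.2 (h ▸ hm))
      ham haw
  refine ⟨P ∪ A₁, Set.union_subset (hPB.trans Set.sdiff_subset) fun a ha => hAs ha.1,
    ?_, ?_⟩
  · rintro x (hx | hx) y (hy | hy) hxy
    exacts [hP hx hy hxy, (hA₁P y hy x hx).symm, hA₁P x hx y hy, hA hx.1 hy.1 hxy]
  · have hA₂Q : ∀ a ∈ A, a ∉ A₁ → ∀ w ∈ Q, G.Adj a w := fun a ha haA₁ w hw =>
      by_contra fun haw => haA₁ ⟨ha, w, hw, haw⟩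
    rintro x ⟨hx, hxP⟩ y ⟨hy, hyP⟩ hxy
    simp only [Set.mem_union, not_or] at hxP hyP
    by_cases hxA : x ∈ A <;> by_cases hyA : y ∈ A
    · exact hA hxA hyA hxy
    · exact hA₂Q x hxA hxP.2 y ⟨⟨hy, hyA⟩, hyP.1⟩
    · exact (hA₂Q y hyA hyP.2 x ⟨⟨hx, hxA⟩, hxP.1⟩).symm
    · exact hQ ⟨⟨hx, hxA⟩, hxP.1⟩ ⟨⟨hy, hyA⟩, hyP.1⟩ hxy

theorem IsUnipolarSet.isIndepSet_and_ncard_eq_three (h : IsUnipolarSet G s)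
    (hs : ¬ IsCoBipartiteSet G s) (hsub : ∀ t ⊂ s, IsCoBipartiteSet G t) :
    G.IsIndepSet s ∧ s.ncard = 3 := by
  by_cases hT : ∃ t ⊆ s, G.IsIndepSet t ∧ t.ncard = 3
  · obtain ⟨t, hts, ht, ht3⟩ := hT
    obtain rfl : t = s := by
      by_contra hne
      have := (hsub t (hts.ssubset_of_ne hne)).ncard_le_two ht
      omega
    exact ⟨ht, ht3⟩
  · exact absurd (h.isCoBipartiteSet fun t hts ht ht3 => hT ⟨t, hts, ht, ht3⟩) hs

theorem exists_isCompleteBetween_compl_of_not_preconnected_compl (h : ¬ Gᶜ.Preconnected) :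
    ∃ L : Set V, G.IsCompleteBetween L Lᶜ ∧ L.Nonempty ∧ Lᶜ.Nonempty := by
  obtain ⟨a, b, hab⟩ : ∃ a b, ¬ Gᶜ.Reachable a b := by simpa [Preconnected] using h
  refine ⟨{x | Gᶜ.Reachable a x}, fun x hx y hy => ?_, ⟨a, .refl a⟩, ⟨b, hab⟩⟩
  by_contra hxy
  have hne : x ≠ y := by rintro rfl; exact hy hx
  exact hy (hx.trans ((G.compl_adj x y).2 ⟨hne, hxy⟩).reachable)

theorem SimpleGraph.IsClique.union_of_isCompleteBetween (hL : G.IsCompleteBetween L Lᶜ)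
    (hs : G.IsClique s) (ht : G.IsClique t) (hsL : s ⊆ L) (htL : t ⊆ Lᶜ) :
    G.IsClique (s ∪ t) := by
  rintro x (hx | hx) y (hy | hy) hxy
  exacts [hs hx hy hxy, hL (hsL hx) (htL hy), (hL (hsL hy) (htL hx)).symm, ht hx hy hxy]

/-- If the cluster part meets both sides of the join, any two of its vertices on one side
have a common neighbour on the other side, so the cluster part is itself a clique. -/
theorem IsUnipolarSet.isClique_inter_or_isClique_sdiff_or_isCoBipartiteSet
    (hL : G.IsCompleteBetween L Lᶜ) (h : IsUnipolarSet G s) :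
    G.IsClique (s ∩ L) ∨ G.IsClique (s \ L) ∨ IsCoBipartiteSet G s := by
  obtain ⟨A, hAs, hA, hB⟩ := h
  have hsub : ∀ {M}, (s \ A) ∩ M = ∅ → s ∩ M ⊆ A := fun hM x hx =>
    by_contra fun hxA => (Set.eq_empty_iff_forall_notMem.1 hM) x ⟨⟨hx.1, hxA⟩, hx.2⟩
  rcases ((s \ A) ∩ L).eq_empty_or_nonempty with hBL | ⟨l, hlB, hl⟩
  · exact .inl (hA.subset (hsub hBL))
  rcases ((s \ A) ∩ Lᶜ).eq_empty_or_nonempty with hBR | ⟨r, hrB, hr⟩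
  · exact .inr (.inl (hA.subset (hsub hBR)))
  refine .inr (.inr ⟨A, hAs, hA, fun x hx y hy hxy => ?_⟩)
  by_cases hxL : x ∈ L <;> by_cases hyL : y ∈ L
  · exact hB hx hrB hy (hL hxL hr) (hL hyL hr).symm hxy
  · exact hL hxL hyL
  · exact (hL hyL hxL).symm
  · exact hB hx hlB hy (hL hl hxL).symm (hL hl hyL) hxy

theorem isUnipolarSet_univ_of_isCompleteBetween (hL : G.IsCompleteBetween L Lᶜ)
    (hc : G.IsClique L) (h : IsUnipolarSet G Lᶜ) : IsUnipolarSet G Set.univ := by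
  obtain ⟨A, hAL, hA, hB⟩ := h
  refine ⟨L ∪ A, Set.subset_univ _, hc.union_of_isCompleteBetween hL hA subset_rfl hAL, ?_⟩
  convert hB using 1
  ext x
  by_cases hx : x ∈ L <;> simp [hx]

theorem isCoBipartiteSet_univ_of_isCompleteBetween (hL : G.IsCompleteBetween L Lᶜ)
    (h : IsCoBipartiteSet G L) (hc : IsCoBipartiteSet G Lᶜ) : IsCoBipartiteSet G Set.univ := by
  obtain ⟨A, hAL, hA, hA'⟩ := h
  obtain ⟨B, hBL, hB, hB'⟩ := hc
  refine ⟨A ∪ B, Set.subset_univ _, hA.union_of_isCompleteBetween hL hB hAL hBL, ?_⟩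
  convert hA'.union_of_isCompleteBetween hL hB' Set.sdiff_subset Set.sdiff_subset using 1
  ext x
  by_cases hx : x ∈ L
  · simpa [hx] using fun _ h => hBL h hx
  · simpa [hx] using fun _ h => hx (hAL h)

theorem not_isCoBipartiteSet_or_not_isCoBipartiteSet_compl
    (hnot : ¬ IsUnipolarSet G Set.univ) (hL : G.IsCompleteBetween L Lᶜ) :
    ¬ IsCoBipartiteSet G L ∨ ¬ IsCoBipartiteSet G Lᶜ :=
  not_and_or.1 fun h =>
    hnot (isCoBipartiteSet_univ_of_isCompleteBetween hL h.1 h.2).isUnipolarSet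

theorem isClique_sdiff_singleton_of_minimal (hmin : ∀ s, s ≠ Set.univ → IsUnipolarSet G s)
    (hL : G.IsCompleteBetween L Lᶜ) (hnc : ¬ IsCoBipartiteSet G Lᶜ) {u : V} (hu : u ∈ L) :
    G.IsClique (L \ {u}) := by
  have hs : ({u}ᶜ : Set V) ≠ Set.univ := by simp
  rcases (hmin _ hs).isClique_inter_or_isClique_sdiff_or_isCoBipartiteSet hL with h | h | h
  · refine h.subset ?_
    intro x hx
    exact ⟨hx.2, hx.1⟩
  · have hLc : Lᶜ ⊆ {u}ᶜ \ L := fun x hx => ⟨fun hxu => hx (hxu ▸ hu), hx⟩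
    exact absurd (h.subset hLc).isCoBipartiteSet hnc
  · refine absurd (h.mono ?_) hnc
    rintro x hx rfl
    exact hx hu

theorem isCoBipartiteSet_of_ssubset_compl_of_minimal
    (hmin : ∀ s, s ≠ Set.univ → IsUnipolarSet G s) (hL : G.IsCompleteBetween L Lᶜ)
    (hLc : ¬ G.IsClique L) {W : Set V} (hW : W ⊂ Lᶜ) : IsCoBipartiteSet G W := by
  obtain ⟨x, hxL, hxW⟩ := Set.exists_of_ssubset hW
  have hs : L ∪ W ≠ Set.univ := fun h => by
    have := h ▸ Set.mem_univ x
    exact this.elim hxL hxW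
  rcases (hmin _ hs).isClique_inter_or_isClique_sdiff_or_isCoBipartiteSet hL with h | h | h
  · refine absurd (h.subset ?_) hLc
    intro y hy
    exact ⟨.inl hy, hy⟩
  · refine (h.subset ?_).isCoBipartiteSet
    intro y hy
    exact ⟨.inr hy, hW.subset hy⟩
  · exact h.mono Set.subset_union_right

theorem isIndepSet_ncard_of_minimal (hnot : ¬ IsUnipolarSet G Set.univ)
    (hmin : ∀ s, s ≠ Set.univ → IsUnipolarSet G s) (hL : G.IsCompleteBetween L Lᶜ)
    (hLne : L.Nonempty) (hnc : ¬ IsCoBipartiteSet G Lᶜ) :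
    (G.IsIndepSet L ∧ L.ncard = 2) ∧ G.IsIndepSet Lᶜ ∧ Lᶜ.ncard = 3 := by
  have hLc' : Lᶜ ≠ Set.univ := Set.compl_ne_univ.2 hLne
  have hLc : ¬ G.IsClique L := fun hc =>
    hnot (isUnipolarSet_univ_of_isCompleteBetween hL hc (hmin _ hLc'))
  exact ⟨isIndepSet_and_ncard_eq_two_of_forall_isClique_sdiff_singleton hLc
      fun u => isClique_sdiff_singleton_of_minimal hmin hL hnc,
    (hmin _ hLc').isIndepSet_and_ncard_eq_three hnc
      fun W => isCoBipartiteSet_of_ssubset_compl_of_minimal hmin hL hLc⟩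

theorem isCompleteBetween_K23 :
    K23.IsCompleteBetween (Set.range Sum.inl) (Set.range Sum.inl)ᶜ := by
  rintro _ ⟨i, rfl⟩ _ hy
  rw [Set.compl_range_inl] at hy
  obtain ⟨j, rfl⟩ := hy
  simp [K23]

theorem not_unipolar_K23 : ¬ Unipolar K23 := by
  rw [unipolar_iff_isUnipolarSet_univ]
  intro h
  rcases h.isClique_inter_or_isClique_sdiff_or_isCoBipartiteSet isCompleteBetween_K23 with
    h | h | h
  · exact (by simp [K23] : ¬ K23.Adj (.inl 0) (.inl 1))
      (h ⟨trivial, 0, rfl⟩ ⟨trivial, 1, rfl⟩ (by simp))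
  · exact (by simp [K23] : ¬ K23.Adj (.inr 0) (.inr 1))
      (h ⟨trivial, by simp⟩ ⟨trivial, by simp⟩ (by simp))
  · have hindep : K23.IsIndepSet (Set.range Sum.inr) := by
      rintro _ ⟨i, rfl⟩ _ ⟨j, rfl⟩ -
      simp [K23]
    have := (h.mono (Set.subset_univ _)).ncard_le_two hindep
    rw [Set.ncard_range_of_injective Sum.inr_injective, Nat.card_eq_fintype_card,
      Fintype.card_fin] at this
    omega

theorem isUnipolarSet_K23_of_ne_univ {s : Set (Fin 2 ⊕ Fin 3)} (hs : s ≠ Set.univ) :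
    IsUnipolarSet K23 s := by
  obtain ⟨x, hx⟩ := (Set.ne_univ_iff_exists_notMem s).1 hs
  rcases x with i | j
  · refine ⟨s ∩ Set.range Sum.inl, Set.inter_subset_left, ?_, ?_⟩
    · rintro _ ⟨ha, a, rfl⟩ _ ⟨hb, b, rfl⟩ hab
      have : a ≠ i := by rintro rfl; exact hx ha
      have : b ≠ i := by rintro rfl; exact hx hb
      exact absurd (by omega : a = b) (by simpa using hab)
    · rintro (u | u) (w | w) - ⟨hu, hu'⟩ ⟨hw, hw'⟩ - huw - -
      all_goals simp_all [K23]
  · refine IsCoBipartiteSet.isUnipolarSet ⟨s ∩ {.inl 0, .inr (j + 1)}, Set.inter_subset_left,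
      (isClique_pair.2 (by simp [K23])).subset Set.inter_subset_right,
      (isClique_pair.2 (by simp [K23]) : K23.IsClique {.inl 1, .inr (j + 2)}).subset ?_⟩
    rintro (a | k) ⟨hk, hk'⟩
    · fin_cases a <;> simp_all
    · fin_cases j <;> fin_cases k <;> simp_all

theorem minUnipolarObstruction_K23 : MinUnipolarObstruction K23 :=
  minUnipolarObstruction_iff.2
    ⟨unipolar_iff_isUnipolarSet_univ.not.1 not_unipolar_K23,
      fun _ => isUnipolarSet_K23_of_ne_univ⟩

theorem nonempty_iso_completeBipartiteGraph (hL : G.IsCompleteBetween L Lᶜ)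
    (hL₁ : G.IsIndepSet L) (hL₂ : G.IsIndepSet Lᶜ) :
    Nonempty (G ≃g completeBipartiteGraph L ↥Lᶜ) := by
  classical
  refine ⟨RelIso.symm ⟨Equiv.Set.sumCompl L, fun {a b} => ?_⟩⟩
  rcases a with ⟨x, hx⟩ | ⟨x, hx⟩ <;> rcases b with ⟨y, hy⟩ | ⟨y, hy⟩
  · exact iff_of_false (fun h => hL₁ hx hy h.ne h) (by simp)
  · exact iff_of_true (hL hx hy) (by simp)
  · exact iff_of_true (hL hy hx).symm (by simp)
  · exact iff_of_false (fun h => hL₂ hx hy h.ne h) (by simp)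

theorem nonempty_iso_K23 (hL : G.IsCompleteBetween L Lᶜ) (hL₁ : G.IsIndepSet L)
    (h₁ : L.ncard = 2) (hL₂ : G.IsIndepSet Lᶜ) (h₂ : Lᶜ.ncard = 3) :
    Nonempty (G ≃g K23) := by
  obtain ⟨e⟩ := nonempty_iso_completeBipartiteGraph hL hL₁ hL₂
  have := (Set.finite_of_ncard_ne_zero (s := L) (by omega)).to_subtype
  have := (Set.finite_of_ncard_ne_zero (s := Lᶜ) (by omega)).to_subtype
  exact ⟨e.trans (completeBipartiteGraphCongr (Finite.equivFinOfCardEq h₁)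
    (Finite.equivFinOfCardEq h₂))⟩

end

theorem stmt_1_general {V : Type*} (G : SimpleGraph V) (hG : ¬ Gᶜ.Preconnected) :
    MinUnipolarObstruction G ↔ Nonempty (G ≃g K23) := by
  refine ⟨fun h => ?_, fun ⟨e⟩ => minUnipolarObstruction_K23.of_iso e⟩
  rw [minUnipolarObstruction_iff] at h
  obtain ⟨L, hL, hLne, hLcne⟩ := exists_isCompleteBetween_compl_of_not_preconnected_compl hG
  obtain ⟨S, hS, hSne, hnc⟩ : ∃ S : Set V,
      G.IsCompleteBetween S Sᶜ ∧ S.Nonempty ∧ ¬ IsCoBipartiteSet G Sᶜ := by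
    rcases not_isCoBipartiteSet_or_not_isCoBipartiteSet_compl h.1 hL with hnc | hnc
    · exact ⟨Lᶜ, by rwa [compl_compl, isCompleteBetween_comm], hLcne, by rwa [compl_compl]⟩
    · exact ⟨L, hL, hLne, hnc⟩
  obtain ⟨⟨hS₁, h₁⟩, hS₂, h₂⟩ := isIndepSet_ncard_of_minimal h.1 h.2 hS hSne hnc
  exact nonempty_iso_K23 hS hS₁ h₁ hS₂ h₂

/-- If the complement of `G` is disconnected, then `G` is a minimal unipolar
obstruction if and only if `G` is isomorphic to `K_{2,3}`. -/
theorem stmt_1 {V : Type*} [Fintype V] (G : SimpleGraph V) (hG : ¬ Gᶜ.Preconnected) :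
    MinUnipolarObstruction G ↔ Nonempty (G ≃g K23) :=
  stmt_1_general G hG
end

section
/- Let G = (S,K,R) be a P-spider, where P is the banner graph (a four-cycle with one pendant vertex attached). Then G is unipolar if and only if R is empty or R is a clique. Consequently, no P-spider is a minimal unipolar obstruction. -/
open SimpleGraph

universe u v

/-! If `R` is a clique, then `R` together with the adjacent midpoints `0, 1` is a clique whose
complement `{2, 3, 4}` induces `K₂ + K₁`. Otherwise two nonadjacent vertices of `R` together with
the four-cycle induce the complement of `paw + K₂`, which is not unipolar; as this induced subgraph
misses the pendant vertex `4`, `G` cannot be a minimal obstruction either. -/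

instance : DecidableRel banner.Adj := fun _ _ => by unfold banner; infer_instance

/-- The complement of `paw + K₂`, labelled so that `0 1 2 3` is the four-cycle of `banner`. -/
def coPawK2 : SimpleGraph (Fin 6) :=
  fromEdgeSet {s(0, 1), s(1, 2), s(2, 3), s(3, 0), s(4, 0), s(4, 1), s(4, 3), s(5, 0), s(5, 1),
    s(5, 3)}

instance : DecidableRel coPawK2.Adj := fun _ _ => by unfold coPawK2; infer_instance

section Unipolar

variable {V W : Type*} {G : SimpleGraph V} {H : SimpleGraph W}

theorem IsClusterSet.mono {B B' : Set V} (hB : IsClusterSet G B) (h : B' ⊆ B) :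
    IsClusterSet G B' :=
  fun _ _ _ hu hw hx => hB (h hu) (h hw) (h hx)

theorem IsClusterSet.image (φ : H ↪g G) {T : Set W} (hT : IsClusterSet H T) :
    IsClusterSet G (φ '' T) := by
  rintro _ _ _ ⟨u, hu, rfl⟩ ⟨w, hw, rfl⟩ ⟨x, hx, rfl⟩ huw hwx hux
  exact φ.map_adj_iff.mpr (hT hu hw hx (φ.map_adj_iff.mp huw) (φ.map_adj_iff.mp hwx)
    (ne_of_apply_ne φ hux))

theorem IsClusterSet.mem_or_mem_or_mem_of_compl {A : Set V} (hB : IsClusterSet G Aᶜ) {u w x : V}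
    (huw : G.Adj u w) (hwx : G.Adj w x) (hux : u ≠ x) (hn : ¬ G.Adj u x) :
    u ∈ A ∨ w ∈ A ∨ x ∈ A := by
  by_contra! h
  exact hn (hB h.1 h.2.1 h.2.2 huw hwx hux)

theorem Unipolar.of_embedding (φ : H ↪g G) (hG : Unipolar G) : Unipolar H := by
  obtain ⟨A, hA, hB⟩ := hG
  refine ⟨φ ⁻¹' A, fun u hu w hw huw => φ.map_adj_iff.mp (hA hu hw (φ.injective.ne huw)), ?_⟩
  intro u w x hu hw hx huw hwx hux
  exact φ.map_adj_iff.mp (hB hu hw hx (φ.map_adj_iff.mpr huw) (φ.map_adj_iff.mpr hwx)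
    (φ.injective.ne hux))

theorem MinUnipolarObstruction.unipolar_of_embedding (hG : MinUnipolarObstruction G)
    (φ : H ↪g G) (hφ : Set.range φ ≠ Set.univ) : Unipolar H :=
  (hG.2 _ hφ).of_embedding φ.isoInduceRange.toEmbedding

end Unipolar

theorem not_unipolar_coPawK2 : ¬ Unipolar coPawK2 := by
  rintro ⟨A, hA, hB⟩
  have nonedge (u x : Fin 6) (hu : u ∈ A) (hx : x ∈ A) (hux : u ≠ x := by decide)
      (hn : ¬ coPawK2.Adj u x := by decide) : False :=
    hn (hA hu hx hux)
  have p3 (u w x : Fin 6) (huw : coPawK2.Adj u w := by decide)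
      (hwx : coPawK2.Adj w x := by decide) (hux : u ≠ x := by decide)
      (hn : ¬ coPawK2.Adj u x := by decide) : u ∈ A ∨ w ∈ A ∨ x ∈ A :=
    hB.mem_or_mem_or_mem_of_compl huw hwx hux hn
  -- `2 ∉ A`, since its non-neighbours `0, 4, 5` induce the path `4 0 5`; then the paths
  -- `2 d 4` and `2 d 5` put both `d = 1` and `d = 3` into `A`, although they are nonadjacent.
  have h2 : 2 ∉ A := fun h2 => by
    rcases p3 4 0 5 with h | h | h
    exacts [nonedge 2 4 h2 h, nonedge 0 2 h h2, nonedge 2 5 h2 h]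
  have forced (d : Fin 6) (h4 : 2 ∈ A ∨ d ∈ A ∨ 4 ∈ A) (h5 : 2 ∈ A ∨ d ∈ A ∨ 5 ∈ A) : d ∈ A :=
    by_contra fun hd =>
      nonedge 4 5 ((h4.resolve_left h2).resolve_left hd) ((h5.resolve_left h2).resolve_left hd)
  exact nonedge 1 3 (forced 1 (p3 2 1 4) (p3 2 1 5)) (forced 3 (p3 2 3 4) (p3 2 3 5))

section Spider

variable {V : Type*} {G : SimpleGraph V} {S K R : Set V}

theorem IsBaseSpider.exists_embedding {n : ℕ} {B : SimpleGraph (Fin n)} {M E : Set (Fin n)}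
    (h : IsBaseSpider B M E G S K R) (hME : M ∪ E = Set.univ) :
    ∃ φ : B ↪g G, R = (Set.range φ)ᶜ ∧ ∀ r ∈ R, ∀ i, G.Adj r (φ i) ↔ i ∈ M := by
  obtain ⟨f, hinj, hadj, rfl, rfl, rfl, hRK, hRS⟩ := h
  refine ⟨⟨⟨f, hinj⟩, hadj _ _⟩, rfl, fun r hr i => ⟨fun hri => ?_, fun hi => ?_⟩⟩
  · by_contra hi
    have hiE : i ∈ E := (hME ▸ Set.mem_univ i).resolve_left hi
    exact hRS r hr _ ⟨i, hiE, rfl⟩ hri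
  · exact hRK r hr _ ⟨i, hi, rfl⟩

theorem banner_midpoints_union_endpoints :
    ({0, 1, 3} : Set (Fin 5)) ∪ {2, 4} = Set.univ := by
  ext i; fin_cases i <;> simp

variable (h : IsBaseSpider banner ({0, 1, 3} : Set (Fin 5)) ({2, 4} : Set (Fin 5)) G S K R)
include h

theorem IsBaseSpider.unipolar_of_isClique (hR : G.IsClique R) : Unipolar G := by
  obtain ⟨φ, hRφ, hRadj⟩ := h.exists_embedding banner_midpoints_union_endpoints
  refine ⟨insert (φ 0) (insert (φ 1) R), ?_, ?_⟩
  · refine isClique_insert.mpr ⟨isClique_insert.mpr ⟨hR, fun r hr _ => ?_⟩, ?_⟩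
    · exact ((hRadj r hr 1).mpr (by simp)).symm
    · rintro v (rfl | hv) -
      · exact φ.map_adj_iff.mpr (by decide)
      · exact ((hRadj v hv 0).mpr (by simp)).symm
  · have hsub : (insert (φ 0) (insert (φ 1) R))ᶜ ⊆ φ '' {2, 3, 4} := by
      intro v hv
      simp only [Set.mem_compl_iff, Set.mem_insert_iff, not_or, hRφ, not_not] at hv
      obtain ⟨hv0, hv1, i, rfl⟩ := hv
      fin_cases i <;> simp_all
    exact (IsClusterSet.image φ (by unfold IsClusterSet; decide)).mono hsub

theorem IsBaseSpider.exists_coPawK2_embedding (hR : ¬ G.IsClique R) :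
    ∃ φ : coPawK2 ↪g G, Set.range φ ≠ Set.univ := by
  obtain ⟨φ, hRφ, hRadj⟩ := h.exists_embedding banner_midpoints_union_endpoints
  obtain ⟨r₁, hr₁, r₂, hr₂, hne, hn⟩ : ∃ r₁ ∈ R, ∃ r₂ ∈ R, r₁ ≠ r₂ ∧ ¬ G.Adj r₁ r₂ := by
    simpa [isClique_iff, Set.Pairwise] using hR
  have hr₁φ (i : Fin 5) : r₁ ≠ φ i := fun he => (hRφ ▸ hr₁) ⟨i, he.symm⟩
  have hr₂φ (i : Fin 5) : r₂ ≠ φ i := fun he => (hRφ ▸ hr₂) ⟨i, he.symm⟩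
  have hφr₁ (i : Fin 5) := G.adj_comm (φ i) r₁ |>.trans (hRadj r₁ hr₁ i)
  have hφr₂ (i : Fin 5) := G.adj_comm (φ i) r₂ |>.trans (hRadj r₂ hr₂ i)
  have hadj (i j : Fin 6) : G.Adj (![φ 0, φ 1, φ 2, φ 3, r₁, r₂] i)
      (![φ 0, φ 1, φ 2, φ 3, r₁, r₂] j) ↔ coPawK2.Adj i j := by
    fin_cases i <;> fin_cases j <;>
      simp +decide [hRadj r₁ hr₁, hRadj r₂ hr₂, hφr₁, hφr₂, hn, G.adj_comm r₂ r₁]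
  refine ⟨⟨⟨![φ 0, φ 1, φ 2, φ 3, r₁, r₂], fun i j hij => ?_⟩, hadj _ _⟩, ?_⟩
  · fin_cases i <;> fin_cases j <;>
      first | rfl | simp [hne, hne.symm, hr₁φ, hr₂φ, (hr₁φ _).symm, (hr₂φ _).symm] at hij
  · refine (Set.ne_univ_iff_exists_notMem _).mpr ⟨φ 4, ?_⟩
    rintro ⟨i, hi⟩
    change ![φ 0, φ 1, φ 2, φ 3, r₁, r₂] i = φ 4 at hi
    fin_cases i <;> simp [hr₁φ, hr₂φ] at hi

theorem IsBaseSpider.unipolar_iff_isClique : Unipolar G ↔ G.IsClique R := by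
  refine ⟨fun hG => by_contra fun hR => ?_, h.unipolar_of_isClique⟩
  obtain ⟨φ, -⟩ := h.exists_coPawK2_embedding hR
  exact not_unipolar_coPawK2 (hG.of_embedding φ)

end Spider

theorem stmt_5_general {V : Type*} (G : SimpleGraph V) (S K R : Set V)
    (h : IsBaseSpider banner ({0, 1, 3} : Set (Fin 5)) ({2, 4} : Set (Fin 5)) G S K R) :
    (Unipolar G ↔ R = ∅ ∨ G.IsClique R) ∧ ¬ MinUnipolarObstruction G := by
  have hiff := h.unipolar_iff_isClique
  refine ⟨hiff.trans ⟨Or.inr, ?_⟩, fun hmin => ?_⟩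
  · rintro (rfl | hR)
    exacts [isClique_empty, hR]
  · obtain ⟨φ, hφ⟩ := h.exists_coPawK2_embedding (hiff.not.mp hmin.1)
    exact not_unipolar_coPawK2 (hmin.unipolar_of_embedding φ hφ)

/-- A `P`-spider (`P` the banner) `G = (S, K, R)` is unipolar iff `R` is empty or
`R` is a clique; consequently no `P`-spider is a minimal unipolar obstruction. -/
theorem stmt_5 {V : Type*} [Fintype V] (G : SimpleGraph V) (S K R : Set V)
    (h : IsBaseSpider banner ({0, 1, 3} : Set (Fin 5)) ({2, 4} : Set (Fin 5)) G S K R) :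
    (Unipolar G ↔ R = ∅ ∨ G.IsClique R) ∧ ¬ MinUnipolarObstruction G :=
  stmt_5_general G S K R h
end

section
/- Let s ≥ 2 be an integer. Every minimal (s,1)-polar obstruction different from K_1 + 2K_2 and from 2K_1 + C_4 has at most two connected components. -/
open SimpleGraph

universe u v

/-!
A split graph is `(s,1)`-polar, and every proper induced subgraph of a minimal obstruction has a
partition into a complete multipartite set, on which nonadjacency is transitive, and a clique.
Pick vertices in three distinct components. If two of these components contain edges `ab` and `cd`
and `v` lies in the third, then `{a, b, c, d, v}` induces `K₁ + 2K₂`, which has no such partition;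
by minimality these five vertices are the whole graph. Otherwise two of the components are isolated
vertices `v₁, v₂`. A partition of `G - v₂` must put every vertex other than `v₁, v₂` into the
multipartite part, as otherwise `G` would be split, and then non-splitness produces an induced
`C₄`, so that `G` is `2K₁ + C₄` by the same argument.
-/

section

variable {V : Type*} {G : SimpleGraph V} {s : ℕ} {A I t : Set V} {u w x a b c d v v₁ v₂ : V}

lemma IsCompleteMultipartiteSet.not_adj_trans (hA : IsCompleteMultipartiteSet G A)
    (hu : u ∈ A) (hw : w ∈ A) (hx : x ∈ A) (huw : ¬ G.Adj u w) (hwx : ¬ G.Adj w x) :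
    ¬ G.Adj u x := by
  by_cases h₁ : u = w
  · exact h₁ ▸ hwx
  by_cases h₂ : w = x
  · exact h₂ ▸ huw
  by_cases h₃ : u = x
  · exact h₃ ▸ G.loopless.irrefl u
  exact hA hu hw hx h₁ h₂ h₃ huw hwx

lemma IsCompleteMultipartiteSet.isIndepSet_of_isolated (hA : IsCompleteMultipartiteSet G A)
    (hvA : v ∈ A) (hv : ∀ w, ¬ G.Adj v w) : _root_.IsIndepSet G A :=
  fun _ _ hx hy => hA.not_adj_trans hx hvA hy (fun h => hv _ h.symm) (hv _)

lemma IsIndepSet.union_of_isolated (hI : _root_.IsIndepSet G I) {J : Set V}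
    (hJ : ∀ v ∈ J, ∀ w, ¬ G.Adj v w) : _root_.IsIndepSet G (I ∪ J) := by
  rintro x y (hx | hx) (hy | hy)
  exacts [hI hx hy, fun h => hJ y hy x h.symm, hJ x hx y, hJ x hx y]

lemma SOnePolar.infOnePolar (h : SOnePolar s G) : InfOnePolar G := by
  obtain ⟨A, ⟨f, hf⟩, hC⟩ := h
  refine ⟨A, fun u w x hu hw hx _ _ _ huw hwx hux => ?_, hC⟩
  have e₁ : f ⟨u, hu⟩ = f ⟨w, hw⟩ := not_ne_iff.mp fun h => huw ((hf _ _).2 h)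
  have e₂ : f ⟨w, hw⟩ = f ⟨x, hx⟩ := not_ne_iff.mp fun h => hwx ((hf _ _).2 h)
  exact (hf ⟨u, hu⟩ ⟨x, hx⟩).1 hux (e₁.trans e₂)

lemma InfOnePolar.exists_of_induce (h : InfOnePolar (G.induce t)) :
    ∃ A : Set V, IsCompleteMultipartiteSet G A ∧ G.IsClique (t \ A) := by
  obtain ⟨A, hA, hC⟩ := h
  refine ⟨Subtype.val '' A, ?_, ?_⟩
  · rintro _ _ _ ⟨u, hu, rfl⟩ ⟨w, hw, rfl⟩ ⟨x, hx, rfl⟩ huw hwx hux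
    exact hA hu hw hx (ne_of_apply_ne _ huw) (ne_of_apply_ne _ hwx) (ne_of_apply_ne _ hux)
  · rintro u ⟨hut, huA⟩ w ⟨hwt, hwA⟩ huw
    exact hC (show (⟨u, hut⟩ : t) ∉ A from fun h => huA ⟨_, h, rfl⟩)
      (show (⟨w, hwt⟩ : t) ∉ A from fun h => hwA ⟨_, h, rfl⟩)
      (fun h => huw (congrArg Subtype.val h))

namespace SimpleGraph

def IsSplit (G : SimpleGraph V) : Prop :=
  ∃ I : Set V, _root_.IsIndepSet G I ∧ G.IsClique Iᶜ

lemma IsSplit.sOnePolar (hs : 0 < s) (hG : G.IsSplit) : SOnePolar s G := by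
  obtain ⟨I, hI, hC⟩ := hG
  exact ⟨I, ⟨fun _ => ⟨0, hs⟩, fun x y => by simp [hI x.2 y.2]⟩, hC⟩

lemma exists_not_adj_of_not_isSplit (hG : ¬ G.IsSplit) (hI : _root_.IsIndepSet G I) :
    ∃ x ∉ I, ∃ y ∉ I, x ≠ y ∧ ¬ G.Adj x y := by
  by_contra! h
  exact hG ⟨I, hI, fun x hx y hy hxy => h x hx y hy hxy⟩

lemma isSplit_of_isolated (hI : _root_.IsIndepSet G I) (hv : ∀ w, ¬ G.Adj v w)
    (hB : G.IsClique ({v}ᶜ \ I)) : G.IsSplit := by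
  refine ⟨I ∪ {v}, hI.union_of_isolated fun _ h => h ▸ hv, ?_⟩
  rwa [Set.compl_union, Set.inter_comm, ← Set.sdiff_eq]

lemma not_adj_of_not_reachable (h : ¬ G.Reachable u w) : ¬ G.Adj u w :=
  fun hadj => h hadj.reachable

lemma ne_of_not_reachable (h : ¬ G.Reachable u w) : u ≠ w := by
  rintro rfl
  exact h .rfl

lemma IsClique.mem_or_mem_of_not_adj (hB : G.IsClique (t \ A)) (hu : u ∈ t) (hw : w ∈ t)
    (hne : u ≠ w) (hadj : ¬ G.Adj u w) : u ∈ A ∨ w ∈ A := by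
  by_contra! h
  exact hadj (hB ⟨hu, h.1⟩ ⟨hw, h.2⟩ hne)

lemma IsClique.mem_or_mem_of_not_reachable (hB : G.IsClique (t \ A)) (hu : u ∈ t) (hw : w ∈ t)
    (h : ¬ G.Reachable u w) : u ∈ A ∨ w ∈ A :=
  hB.mem_or_mem_of_not_adj hu hw (ne_of_not_reachable h) (not_adj_of_not_reachable h)

lemma not_isClique_diff_of_K1_2K2 (hA : IsCompleteMultipartiteSet G A)
    (ha : a ∈ t) (hb : b ∈ t) (hc : c ∈ t) (hd : d ∈ t) (hv : v ∈ t)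
    (hab : G.Adj a b) (hcd : G.Adj c d) (hac : ¬ G.Reachable a c)
    (hva : ¬ G.Reachable v a) (hvc : ¬ G.Reachable v c) : ¬ G.IsClique (t \ A) := by
  intro hB
  have hbc : ¬ G.Reachable b c := fun h => hac (hab.reachable.trans h)
  have hvb : ¬ G.Reachable v b := fun h => hva (h.trans hab.reachable.symm)
  by_cases hvA : v ∈ A
  · have hvd : ¬ G.Reachable v d := fun h => hvc (h.trans hcd.reachable.symm)
    have hmem : (a ∈ A ∧ b ∈ A) ∨ (c ∈ A ∧ d ∈ A) := by
      have := hB.mem_or_mem_of_not_reachable ha hc hac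
      have := hB.mem_or_mem_of_not_reachable hb hc hbc
      have := hB.mem_or_mem_of_not_reachable ha hd fun h => hac (h.trans hcd.reachable.symm)
      have := hB.mem_or_mem_of_not_reachable hb hd fun h => hbc (h.trans hcd.reachable.symm)
      tauto
    rcases hmem with ⟨haA, hbA⟩ | ⟨hcA, hdA⟩
    · exact hA.not_adj_trans haA hvA hbA (not_adj_of_not_reachable fun h => hva h.symm)
        (not_adj_of_not_reachable hvb) hab
    · exact hA.not_adj_trans hcA hvA hdA (not_adj_of_not_reachable fun h => hvc h.symm)
        (not_adj_of_not_reachable hvd) hcd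
  · have hin : ∀ {x}, x ∈ t → ¬ G.Reachable v x → x ∈ A := fun hx h =>
      (hB.mem_or_mem_of_not_reachable hv hx h).resolve_left hvA
    exact hA.not_adj_trans (hin ha hva) (hin hc hvc) (hin hb hvb) (not_adj_of_not_reachable hac)
      (not_adj_of_not_reachable fun h => hbc h.symm) hab

structure IsInducedC4 (G : SimpleGraph V) (a b c d : V) : Prop where
  adj_ab : G.Adj a b
  adj_bc : G.Adj b c
  adj_cd : G.Adj c d
  adj_da : G.Adj d a
  ne_ac : a ≠ c
  ne_bd : b ≠ d
  not_adj_ac : ¬ G.Adj a c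
  not_adj_bd : ¬ G.Adj b d

lemma IsInducedC4.not_isClique_diff (hC4 : G.IsInducedC4 a b c d)
    (hA : IsCompleteMultipartiteSet G A) (ha : a ∈ t) (hb : b ∈ t) (hc : c ∈ t) (hd : d ∈ t)
    (hv₁ : v₁ ∈ t) (hv₂ : v₂ ∈ t) (hv : v₁ ≠ v₂) (h₁ : ∀ w, ¬ G.Adj v₁ w)
    (h₂ : ∀ w, ¬ G.Adj v₂ w) : ¬ G.IsClique (t \ A) := by
  intro hB
  by_cases hv₁A : v₁ ∈ A
  · have key : ∀ {x y}, x ∈ A → y ∈ A → ¬ G.Adj x y := fun hx hy =>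
      hA.not_adj_trans hx hv₁A hy (fun h => h₁ _ h.symm) (h₁ _)
    rcases hB.mem_or_mem_of_not_adj ha hc hC4.ne_ac hC4.not_adj_ac with h | h <;>
      rcases hB.mem_or_mem_of_not_adj hb hd hC4.ne_bd hC4.not_adj_bd with h' | h'
    exacts [key h h' hC4.adj_ab, key h h' hC4.adj_da.symm, key h h' hC4.adj_bc.symm,
      key h h' hC4.adj_cd]
  · have hin : ∀ {x}, x ∈ t → x ≠ v₁ → x ∈ A := fun hx hne =>
      (hB.mem_or_mem_of_not_adj hv₁ hx hne.symm (h₁ _)).resolve_left hv₁A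
    exact hA.not_adj_trans (hin ha fun h => h₁ b (h ▸ hC4.adj_ab)) (hin hv₂ hv.symm)
      (hin hb fun h => h₁ c (h ▸ hC4.adj_bc)) (fun h => h₂ _ h.symm) (h₂ _) hC4.adj_ab

/-- Here `a, c` are any two nonadjacent vertices and `b, d` any two nonadjacent vertices outside
the part of `a`; both pairs exist because `G` is not split. -/
lemma exists_isInducedC4 (hsplit : ¬ G.IsSplit) (hA : IsCompleteMultipartiteSet G A)
    (hsub : ∀ x, x ≠ v₁ → x ≠ v₂ → x ∈ A) (h₁ : ∀ w, ¬ G.Adj v₁ w) (h₂ : ∀ w, ¬ G.Adj v₂ w) :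
    ∃ a b c d, G.IsInducedC4 a b c d := by
  have hiso : ∀ z ∈ ({v₁, v₂} : Set V), ∀ w, ¬ G.Adj z w := by
    rintro z (rfl | rfl) <;> assumption
  have hmem : ∀ {I : Set V} {x}, x ∉ I ∪ {v₁, v₂} → x ∈ A := fun hx =>
    hsub _ (fun h => hx (.inr (.inl h))) (fun h => hx (.inr (.inr h)))
  have hempty : _root_.IsIndepSet G ∅ := fun _ _ h => h.elim
  obtain ⟨a, ha, c, hc, hac, nac⟩ :=
    exists_not_adj_of_not_isSplit hsplit (hempty.union_of_isolated hiso)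
  have hK : _root_.IsIndepSet G {x ∈ A | ¬ G.Adj x a} := fun x y hx hy =>
    hA.not_adj_trans hx.1 (hmem ha) hy.1 hx.2 fun h => hy.2 h.symm
  obtain ⟨b, hb, d, hd, hbd, nbd⟩ :=
    exists_not_adj_of_not_isSplit hsplit (hK.union_of_isolated hiso)
  have hadj : ∀ {x}, x ∉ {x ∈ A | ¬ G.Adj x a} ∪ {v₁, v₂} → G.Adj x a := fun hx =>
    by_contra fun h => hx (.inl ⟨hmem hx, h⟩)
  have hcx : ∀ {x}, x ∉ {x ∈ A | ¬ G.Adj x a} ∪ {v₁, v₂} → G.Adj c x := fun hx =>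
    by_contra fun h => hA.not_adj_trans (hmem hx) (hmem hc) (hmem ha) (fun h' => h h'.symm)
      (fun h' => nac h'.symm) (hadj hx)
  exact ⟨a, b, c, d, (hadj hb).symm, (hcx hb).symm, hcx hd, hadj hd, hac, hbd, nac, nbd⟩

lemma nonempty_iso_E1 (huniv : ∀ x, x = a ∨ x = b ∨ x = c ∨ x = d ∨ x = v)
    (hab : G.Adj a b) (hcd : G.Adj c d) (hac : ¬ G.Reachable a c)
    (hva : ¬ G.Reachable v a) (hvc : ¬ G.Reachable v c) : Nonempty (G ≃g E1) := by
  have hr : ∀ {x y}, ¬ G.Reachable x y → x ≠ y ∧ y ≠ x ∧ ¬ G.Adj x y ∧ ¬ G.Adj y x :=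
    fun h => ⟨ne_of_not_reachable h, ne_of_not_reachable (h ∘ .symm),
      not_adj_of_not_reachable h, not_adj_of_not_reachable (h ∘ .symm)⟩
  have hbc : ¬ G.Reachable b c := fun h => hac (hab.reachable.trans h)
  have hvb : ¬ G.Reachable v b := fun h => hva (h.trans hab.reachable.symm)
  have had := hr fun h => hac (h.trans hcd.reachable.symm)
  have hbd := hr fun h => hbc (h.trans hcd.reachable.symm)
  have hvd := hr fun h => hvc (h.trans hcd.reachable.symm)
  have hac := hr hac; have hbc := hr hbc; have hva := hr hva; have hvb := hr hvb
  have hvc := hr hvc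
  clear hr
  let g : Fin 1 ⊕ (Fin 2 ⊕ Fin 2) → V := Sum.elim (fun _ => v) (Sum.elim ![a, b] ![c, d])
  have hinj : Function.Injective g := by
    rintro (x | x | x) (y | y | y) <;> fin_cases x <;> fin_cases y <;>
      simp_all [g, hab.ne, hcd.ne, hab.ne.symm, hcd.ne.symm]
  have hsurj : Function.Surjective g := fun x => by
    rcases huniv x with rfl | rfl | rfl | rfl | rfl
    exacts [⟨.inr (.inl 0), rfl⟩, ⟨.inr (.inl 1), rfl⟩, ⟨.inr (.inr 0), rfl⟩,
      ⟨.inr (.inr 1), rfl⟩, ⟨.inl 0, rfl⟩]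
  refine ⟨(⟨Equiv.ofBijective g ⟨hinj, hsurj⟩, fun {x y} => ?_⟩ : _ ≃g G).symm⟩
  change G.Adj (g x) (g y) ↔ _
  rcases x with x | x | x <;> rcases y with y | y | y <;> fin_cases x <;> fin_cases y <;>
    simp_all [g, E1, KG, hab.symm, hcd.symm]

lemma nonempty_iso_E3 (huniv : ∀ x, x = a ∨ x = b ∨ x = c ∨ x = d ∨ x = v₁ ∨ x = v₂)
    (hC4 : G.IsInducedC4 a b c d) (hv : v₁ ≠ v₂) (h₁ : ∀ w, ¬ G.Adj v₁ w)
    (h₂ : ∀ w, ¬ G.Adj v₂ w) : Nonempty (G ≃g E3) := by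
  obtain ⟨hab, hbc, hcd, hda, hac, hbd, nac, nbd⟩ := hC4
  have hi : ∀ {v}, (∀ w, ¬ G.Adj v w) → ∀ {x y}, G.Adj x y →
      x ≠ v ∧ y ≠ v ∧ ¬ G.Adj x v ∧ ¬ G.Adj y v := fun hv _ _ h =>
    ⟨fun e => hv _ (e ▸ h), fun e => hv _ (e ▸ h.symm), fun h' => hv _ h'.symm,
      fun h' => hv _ h'.symm⟩
  have ha₁ := hi h₁ hab; have hc₁ := hi h₁ hcd; have ha₂ := hi h₂ hab; have hc₂ := hi h₂ hcd
  clear hi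
  let g : Fin 4 ⊕ Fin 2 → V := Sum.elim ![a, b, c, d] ![v₁, v₂]
  have hinj : Function.Injective g := by
    rintro (x | x) (y | y) <;> fin_cases x <;> fin_cases y <;>
      simp_all [g, hab.ne, hbc.ne, hcd.ne, hda.ne, hab.ne.symm, hbc.ne.symm, hcd.ne.symm,
        hda.ne.symm, hac.symm, hbd.symm, hv.symm, Ne.symm]
  have hsurj : Function.Surjective g := fun x => by
    rcases huniv x with rfl | rfl | rfl | rfl | rfl | rfl
    exacts [⟨.inl 0, rfl⟩, ⟨.inl 1, rfl⟩, ⟨.inl 2, rfl⟩, ⟨.inl 3, rfl⟩, ⟨.inr 0, rfl⟩,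
      ⟨.inr 1, rfl⟩]
  refine ⟨(⟨Equiv.ofBijective g ⟨hinj, hsurj⟩, fun {x y} => ?_⟩ : _ ≃g G).symm⟩
  change G.Adj (g x) (g y) ↔ _
  have nca : ¬ G.Adj c a := fun h => nac h.symm
  have ndb : ¬ G.Adj d b := fun h => nbd h.symm
  rcases x with x | x <;> rcases y with y | y <;> fin_cases x <;> fin_cases y <;>
    simp_all [g, E3, EG, cycleGraph_adj, hab.symm, hbc.symm, hcd.symm, hda.symm] <;> decide

end SimpleGraph

namespace MinSOnePolarObstruction

lemma exists_partition (hG : MinSOnePolarObstruction s G) (ht : t ≠ Set.univ) :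
    ∃ A : Set V, IsCompleteMultipartiteSet G A ∧ G.IsClique (t \ A) :=
  (hG.2 t ht).infOnePolar.exists_of_induce

lemma eq_univ (hG : MinSOnePolarObstruction s G)
    (ht : ∀ A, IsCompleteMultipartiteSet G A → ¬ G.IsClique (t \ A)) : t = Set.univ := by
  by_contra h
  obtain ⟨A, hA, hC⟩ := hG.exists_partition h
  exact ht A hA hC

lemma nonempty_iso_E1_of_adj (hG : MinSOnePolarObstruction s G) (hab : G.Adj a b)
    (hcd : G.Adj c d) (hac : ¬ G.Reachable a c) (hva : ¬ G.Reachable v a)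
    (hvc : ¬ G.Reachable v c) : Nonempty (G ≃g E1) := by
  have ht : ({a, b, c, d, v} : Set V) = Set.univ := hG.eq_univ fun A hA =>
    not_isClique_diff_of_K1_2K2 hA (by simp) (by simp) (by simp) (by simp) (by simp)
      hab hcd hac hva hvc
  exact nonempty_iso_E1 (fun x => by simpa using Set.eq_univ_iff_forall.1 ht x)
    hab hcd hac hva hvc

lemma nonempty_iso_E3_of_isolated (hG : MinSOnePolarObstruction s G) (hs : 0 < s)
    (hv : v₁ ≠ v₂) (h₁ : ∀ w, ¬ G.Adj v₁ w) (h₂ : ∀ w, ¬ G.Adj v₂ w) : Nonempty (G ≃g E3) := by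
  have hsplit : ¬ G.IsSplit := fun h => hG.1 (h.sOnePolar hs)
  obtain ⟨A, hA, hB⟩ := hG.exists_partition (t := {v₂}ᶜ)
    (Set.compl_ne_univ.2 (Set.singleton_nonempty v₂))
  have hv₁A : v₁ ∉ A := fun hv₁A =>
    hsplit (isSplit_of_isolated (hA.isIndepSet_of_isolated hv₁A h₁) h₂ hB)
  have hsub : ∀ x, x ≠ v₁ → x ≠ v₂ → x ∈ A := fun x hx₁ hx₂ =>
    (hB.mem_or_mem_of_not_adj (Set.mem_compl_singleton_iff.2 hv) hx₂ (Ne.symm hx₁)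
      (h₁ x)).resolve_left hv₁A
  obtain ⟨a, b, c, d, hC4⟩ := exists_isInducedC4 hsplit hA hsub h₁ h₂
  have ht : ({a, b, c, d, v₁, v₂} : Set V) = Set.univ := hG.eq_univ fun A hA =>
    hC4.not_isClique_diff hA (by simp) (by simp) (by simp) (by simp) (by simp) (by simp)
      hv h₁ h₂
  exact nonempty_iso_E3 (fun x => by simpa using Set.eq_univ_iff_forall.1 ht x) hC4 hv h₁ h₂

end MinSOnePolarObstruction

end

theorem stmt_7_general {V : Type*} (s : ℕ) (hs : 2 ≤ s) (G : SimpleGraph V)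
    (hG : MinSOnePolarObstruction s G)
    (h1 : ¬ Nonempty (G ≃g E1)) (h2 : ¬ Nonempty (G ≃g E3)) :
    ∀ c₁ c₂ c₃ : G.ConnectedComponent, c₁ = c₂ ∨ c₁ = c₃ ∨ c₂ = c₃ := by
  intro c₁ c₂ c₃
  induction c₁ using ConnectedComponent.ind with | h x₁ => ?_
  induction c₂ using ConnectedComponent.ind with | h x₂ => ?_
  induction c₃ using ConnectedComponent.ind with | h x₃ => ?_
  simp only [ConnectedComponent.eq]
  by_contra! ⟨h₁₂, h₁₃, h₂₃⟩
  have two_edges : ∀ {x y z}, ¬ G.Reachable x y → ¬ G.Reachable z x → ¬ G.Reachable z y →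
      (∃ a, G.Adj x a) → (∃ b, G.Adj y b) → False := fun hxy hzx hzy ⟨_, hxa⟩ ⟨_, hyb⟩ =>
    h1 (hG.nonempty_iso_E1_of_adj hxa hyb hxy hzx hzy)
  have two_isolated : ∀ {x y}, ¬ G.Reachable x y → (¬ ∃ a, G.Adj x a) → (¬ ∃ b, G.Adj y b) →
      False := fun hxy hx hy => h2 (hG.nonempty_iso_E3_of_isolated (by omega)
        (ne_of_not_reachable hxy) (not_exists.1 hx) (not_exists.1 hy))
  by_cases hx₁ : ∃ a, G.Adj x₁ a <;> by_cases hx₂ : ∃ a, G.Adj x₂ a <;>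
    by_cases hx₃ : ∃ a, G.Adj x₃ a
  all_goals first
    | exact two_edges h₁₂ (h₁₃ ∘ .symm) (h₂₃ ∘ .symm) hx₁ hx₂
    | exact two_edges h₁₃ (h₁₂ ∘ .symm) h₂₃ hx₁ hx₃
    | exact two_edges h₂₃ h₁₂ h₁₃ hx₂ hx₃
    | exact two_isolated h₁₂ hx₁ hx₂
    | exact two_isolated h₁₃ hx₁ hx₃
    | exact two_isolated h₂₃ hx₂ hx₃

/-- For `s ≥ 2`, every minimal `(s,1)`-polar obstruction different from
`K_1 + 2K_2` and from `2K_1 + C_4` has at most two connected components. -/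
theorem stmt_7 {V : Type*} [Fintype V] (s : ℕ) (hs : 2 ≤ s) (G : SimpleGraph V)
    (hG : MinSOnePolarObstruction s G)
    (h1 : ¬ Nonempty (G ≃g E1)) (h2 : ¬ Nonempty (G ≃g E3)) :
    ∀ c₁ c₂ c₃ : G.ConnectedComponent, c₁ = c₂ ∨ c₁ = c₃ ∨ c₂ = c₃ :=
  stmt_7_general s hs G hG h1 h2
end
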